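/- Let A ⊆ ℝ^n be a nonempty finite set and C = conv A. Then the end set es(C) equals ⋃_{A' ∈ 𝒜} conv A', where 𝒜 := {argmax_{a ∈ A} ⟨a, w⟩ | w ∈ ℝ^n, max_{a ∈ A} ⟨a, w⟩ > 0}. -/

import Mathlib

/-!
A point `x` of `C = conv A` lies in the end set exactly when some functional `⟪·, w⟫` attains its
maximum over `C` at `x` with a positive value; the points of `C` where this maximum is attained
form the convex hull of the maximizers in `A`. The existence of such a `w` is Farkas' lemma: if
there were none, `x` would lie in the cone generated by the vectors `a - x`, `a ∈ A`, say
`x = ∑ μₐ • (a - x)` with `μ ≥ 0`, and then `(1 + 1 / ∑ μₐ) • x ∈ C`. Farkas' lemma applies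
because a finitely generated cone is closed: by conic Carathéodory it is a finite union of cones
over linearly independent sets.
-/

open Set
open scoped RealInnerProductSpace

namespace PointedCone

variable {E : Type*} [AddCommGroup E] [Module ℝ E]

theorem mem_hull_finset_iff {s : Finset E} {v : E} :
    v ∈ hull ℝ (s : Set E) ↔ ∃ μ : E → ℝ, (∀ a ∈ s, 0 ≤ μ a) ∧ ∑ a ∈ s, μ a • a = v := by
  constructor
  · intro hv
    obtain ⟨f, -, rfl⟩ := Submodule.mem_span_finset.1 hv
    exact ⟨fun a => f a, fun a _ => (f a).2, rfl⟩
  · rintro ⟨μ, hμ, rfl⟩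
    exact Submodule.sum_mem _ fun a ha => Submodule.smul_mem _ ⟨μ a, hμ a ha⟩ (subset_hull ha)

theorem exists_mem_hull_erase_of_not_linearIndepOn [DecidableEq E] {s : Finset E}
    (hs : ¬LinearIndepOn ℝ id (s : Set E)) {v : E} (hv : v ∈ hull ℝ (s : Set E)) :
    ∃ a ∈ s, v ∈ hull ℝ (s.erase a : Set E) := by
  obtain ⟨c, hc, b, hb, hcb⟩ := not_linearIndepOn_finset_iff.1 hs
  simp only [id] at hc
  wlog hcb_pos : 0 < c b generalizing c
  · exact this (-c) (neg_ne_zero.2 hcb) (by simp [hc])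
      (neg_pos.2 (lt_of_le_of_ne (not_lt.1 hcb_pos) hcb))
  obtain ⟨μ, hμ, rfl⟩ := mem_hull_finset_iff.1 hv
  -- subtract from `μ` the largest multiple `θ • c` keeping it nonnegative; it vanishes at `a`
  obtain ⟨a, ha, hmin⟩ := (s.filter (0 < c ·)).exists_min_image (fun a => μ a / c a)
    ⟨b, Finset.mem_filter.2 ⟨hb, hcb_pos⟩⟩
  rw [Finset.mem_filter] at ha
  set θ := μ a / c a
  refine ⟨a, ha.1, mem_hull_finset_iff.2 ⟨μ - θ • c, fun a' ha' => ?_, ?_⟩⟩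
  · have ha's := Finset.mem_of_mem_erase ha'
    simp only [Pi.sub_apply, Pi.smul_apply, smul_eq_mul, sub_nonneg]
    rcases le_or_gt (c a') 0 with h | h
    · nlinarith [hμ a' ha's, div_nonneg (hμ a ha.1) ha.2.le]
    · exact (le_div_iff₀ h).1 (hmin a' (Finset.mem_filter.2 ⟨ha's, h⟩))
  · rw [Finset.sum_erase _ (by simp [θ, div_mul_cancel₀ _ ha.2.ne'])]
    simp [sub_smul, Finset.sum_sub_distrib, mul_smul, ← Finset.smul_sum, hc]

variable [TopologicalSpace E] [IsTopologicalAddGroup E] [ContinuousSMul ℝ E] [T2Space E]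

theorem isClosed_hull_of_linearIndepOn {s : Finset E} (hs : LinearIndepOn ℝ id (s : Set E)) :
    IsClosed (hull ℝ (s : Set E) : Set E) := by
  let f := Fintype.linearCombination ℝ (fun a : s => (a : E))
  have hf : Topology.IsClosedEmbedding f :=
    LinearMap.isClosedEmbedding_of_injective <| LinearMap.ker_eq_bot'.2 fun g hg =>
      funext <| Fintype.linearIndependent_iff.1 hs g <| by
        simpa [f, Fintype.linearCombination_apply] using hg
  have hhull : (hull ℝ (s : Set E) : Set E) = f '' Ici 0 := by
    ext v
    constructor
    · intro hv
      obtain ⟨μ, hμ, rfl⟩ := mem_hull_finset_iff.1 hv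
      exact ⟨fun a => μ a, fun a => hμ a a.2, by
        simp [f, Fintype.linearCombination_apply, Finset.sum_attach s (fun a => μ a • a)]⟩
    · rintro ⟨μ, hμ, rfl⟩
      simp only [f, Fintype.linearCombination_apply]
      exact Submodule.sum_mem _ fun a _ => Submodule.smul_mem _ ⟨μ a, hμ a⟩ (subset_hull a.2)
  rw [hhull]
  exact hf.isClosedMap _ isClosed_Ici

theorem isClosed_hull_finset (s : Finset E) : IsClosed (hull ℝ (s : Set E) : Set E) := by
  classical
  induction s using Finset.strongInduction with
  | H s ih =>
  by_cases hs : LinearIndepOn ℝ id (s : Set E)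
  · exact isClosed_hull_of_linearIndepOn hs
  · have hunion :
        (hull ℝ (s : Set E) : Set E) = ⋃ a ∈ s, (hull ℝ (s.erase a : Set E) : Set E) := by
      refine Subset.antisymm (fun v hv => ?_) (iUnion₂_subset fun a _ => ?_)
      · simpa using exists_mem_hull_erase_of_not_linearIndepOn hs hv
      · exact Submodule.span_mono (by simp)
    rw [hunion]
    exact isClosed_biUnion_finset fun a ha => ih _ (Finset.erase_ssubset ha)

end PointedCone

section

variable {E : Type*} [AddCommGroup E] [Module ℝ E]

def endSet (C : Set E) : Set E := {x ∈ C | ∀ t : ℝ, 1 < t → t • x ∉ C}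

theorem ne_zero_of_mem_endSet {C : Set E} {x : E} (hx : x ∈ endSet C) : x ≠ 0 := by
  rintro rfl
  exact hx.2 2 one_lt_two (by simpa using hx.1)

theorem mem_convexHull_sep_eq_of_forall_le {s : Set E} {f : E →ₗ[ℝ] ℝ} {x : E}
    (hx : x ∈ convexHull ℝ s) (hf : ∀ a ∈ s, f a ≤ f x) :
    x ∈ convexHull ℝ {a ∈ s | f a = f x} := by
  set F := convexHull ℝ {a ∈ s | f a = f x}
  have hF : ∀ y ∈ F, f y = f x := fun y hy =>
    convexHull_min (fun a ha => ha.2) (convex_hyperplane f.isLinear _) hy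
  have hU : Convex ℝ ({y | f y < f x} ∪ F) := by
    refine convex_iff_forall_pos.2 fun y hy z hz α β hα hβ hαβ => ?_
    by_cases hyz : y ∈ F ∧ z ∈ F
    · exact Or.inr (convex_convexHull ℝ _ hyz.1 hyz.2 hα.le hβ.le hαβ)
    have hy' : f y ≤ f x := hy.elim (fun h => le_of_lt h) fun h => (hF y h).le
    have hz' : f z ≤ f x := hz.elim (fun h => le_of_lt h) fun h => (hF z h).le
    have hlt : f y < f x ∨ f z < f x := by
      rcases hy with hy | hy <;> rcases hz with hz | hz <;> tauto
    refine Or.inl ?_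
    calc f (α • y + β • z) = α * f y + β * f z := by simp
      _ < α * f x + β * f x := by rcases hlt with h | h <;> nlinarith
      _ = f x := by rw [← add_mul, hαβ, one_mul]
  have hsU : s ⊆ {y | f y < f x} ∪ F := fun a ha =>
    (hf a ha).lt_or_eq.imp id fun h => subset_convexHull ℝ _ ⟨ha, h⟩
  exact (convexHull_min hsU hU hx).resolve_left (lt_irrefl (f x))

end

section InnerProductSpace

variable {E : Type*} [NormedAddCommGroup E] [InnerProductSpace ℝ E]

theorem exists_inner_pos_of_mem_endSet [CompleteSpace E] {s : Finset E} {x : E}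
    (hx : x ∈ endSet (convexHull ℝ (s : Set E))) :
    ∃ w : E, 0 < ⟪x, w⟫ ∧ ∀ a ∈ s, ⟪a, w⟫ ≤ ⟪x, w⟫ := by
  classical
  let K : ProperCone ℝ E := ⟨PointedCone.hull ℝ (s.image (· - x) : Set E),
    PointedCone.isClosed_hull_finset _⟩
  have hxK : x ∉ K := by
    intro hxK
    obtain ⟨μ, hμ, hsum⟩ := PointedCone.mem_hull_finset_iff.1 hxK
    rw [Finset.sum_image fun a _ b _ h => sub_left_injective h] at hsum
    set ν := fun a => μ (a - x)
    have hν : ∀ a ∈ s, 0 ≤ ν a := fun a ha => hμ _ (Finset.mem_image_of_mem _ ha)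
    rcases (Finset.sum_nonneg hν).eq_or_lt with hS | hS
    · refine ne_zero_of_mem_endSet hx (hsum.symm.trans (Finset.sum_eq_zero fun a ha => ?_))
      simp [(Finset.sum_eq_zero_iff_of_nonneg hν).1 hS.symm a ha, ν]
    · set S := ∑ a ∈ s, ν a
      refine hx.2 (1 + S⁻¹) (lt_add_of_pos_right _ (inv_pos.2 hS)) ?_
      have hcm : s.centerMass ν id = (1 + S⁻¹) • x := by
        have hsum' : ∑ a ∈ s, ν a • a = (1 + S) • x := by
          simpa [smul_sub, Finset.sum_sub_distrib, ← Finset.sum_smul, sub_eq_iff_eq_add, add_smul,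
            add_comm] using hsum
        simp only [Finset.centerMass, id]
        rw [hsum', smul_smul, inv_mul_eq_div, add_div, div_self hS.ne', one_div, add_comm]
      exact hcm ▸ s.centerMass_mem_convexHull hν hS fun a ha => ha
  obtain ⟨y, hy, hyx⟩ := ProperCone.hyperplane_separation' K hxK
  refine ⟨-y, by simpa [inner_neg_right] using hyx, fun a ha => ?_⟩
  have hya : 0 ≤ ⟪a - x, y⟫ := hy (a - x) (PointedCone.subset_hull (by simp [ha]))
  simp only [inner_neg_right, inner_sub_left] at hya ⊢
  linarith

theorem sSup_image_inner_eq_of_mem_argmax {A : Set E} {w a : E}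
    (ha : a ∈ {a ∈ A | ∀ b ∈ A, ⟪b, w⟫ ≤ ⟪a, w⟫}) :
    sSup ((fun b => ⟪b, w⟫) '' A) = ⟪a, w⟫ :=
  IsGreatest.csSup_eq ⟨mem_image_of_mem _ ha.1, forall_mem_image.2 ha.2⟩

theorem iUnion_convexHull_argmax_subset_endSet (A : Set E) :
    ⋃ w ∈ {w : E | 0 < sSup ((fun a => ⟪a, w⟫) '' A)},
      convexHull ℝ {a ∈ A | ∀ b ∈ A, ⟪b, w⟫ ≤ ⟪a, w⟫} ⊆ endSet (convexHull ℝ A) := by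
  refine iUnion₂_subset fun w hw x hx => ?_
  obtain ⟨a, ha⟩ := convexHull_nonempty_iff.1 ⟨x, hx⟩
  replace hw : 0 < ⟪a, w⟫ := sSup_image_inner_eq_of_mem_argmax ha ▸ hw
  have hxa : ⟪x, w⟫ = ⟪a, w⟫ :=
    convexHull_min (fun b hb => le_antisymm (ha.2 b hb.1) (hb.2 a ha.1))
      (convex_hyperplane ((innerₗ E).flip w).isLinear _) hx
  refine ⟨convexHull_mono (sep_subset _ _) hx, fun t ht htx => ?_⟩
  have htxa : ⟪t • x, w⟫ ≤ ⟪a, w⟫ :=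
    convexHull_min ha.2 (convex_halfSpace_le ((innerₗ E).flip w).isLinear _) htx
  rw [real_inner_smul_left, hxa] at htxa
  nlinarith

theorem endSet_convexHull_subset_iUnion_convexHull_argmax [CompleteSpace E] {A : Set E}
    (hA : A.Finite) :
    endSet (convexHull ℝ A) ⊆ ⋃ w ∈ {w : E | 0 < sSup ((fun a => ⟪a, w⟫) '' A)},
      convexHull ℝ {a ∈ A | ∀ b ∈ A, ⟪b, w⟫ ≤ ⟪a, w⟫} := by
  intro x hx
  lift A to Finset E using hA
  obtain ⟨w, hxw, hmax⟩ := exists_inner_pos_of_mem_endSet hx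
  have hface : x ∈ convexHull ℝ {a ∈ (A : Set E) | ⟪a, w⟫ = ⟪x, w⟫} :=
    mem_convexHull_sep_eq_of_forall_le (f := (innerₗ E).flip w) hx.1 hmax
  have hargmax : {a ∈ (A : Set E) | ⟪a, w⟫ = ⟪x, w⟫} ⊆
      {a ∈ (A : Set E) | ∀ b ∈ (A : Set E), ⟪b, w⟫ ≤ ⟪a, w⟫} :=
    fun a ha => ⟨ha.1, fun b hb => ha.2 ▸ hmax b hb⟩
  obtain ⟨a, ha⟩ := convexHull_nonempty_iff.1 ⟨x, hface⟩
  refine mem_iUnion₂.2 ⟨w, ?_, convexHull_mono hargmax hface⟩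
  rwa [mem_ofPred_eq, sSup_image_inner_eq_of_mem_argmax (hargmax ha), ha.2]

end InnerProductSpace

theorem end_set_convexHull_finite_general {n : ℕ} (A : Set (EuclideanSpace ℝ (Fin n)))
    (hfin : A.Finite) :
    {x ∈ convexHull ℝ A | ∀ t : ℝ, 1 < t → t • x ∉ convexHull ℝ A} =
      ⋃ w ∈ {w : EuclideanSpace ℝ (Fin n) | 0 < sSup ((fun a => ⟪a, w⟫) '' A)},
        convexHull ℝ {a ∈ A | ∀ b ∈ A, ⟪b, w⟫ ≤ ⟪a, w⟫} :=
  (endSet_convexHull_subset_iUnion_convexHull_argmax hfin).antisymm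
    (iUnion_convexHull_argmax_subset_endSet A)

/-- For a finite set A with C = conv A, the end set of C is the union of the
convex hulls of the argmax subsets of A over directions with positive max value. -/
theorem end_set_convexHull_finite {n : ℕ} (A : Set (EuclideanSpace ℝ (Fin n)))
    (hfin : A.Finite) (hne : A.Nonempty) :
    {x ∈ convexHull ℝ A | ∀ t : ℝ, 1 < t → t • x ∉ convexHull ℝ A} =
      ⋃ w ∈ {w : EuclideanSpace ℝ (Fin n) | 0 < sSup ((fun a => ⟪a, w⟫) '' A)},
        convexHull ℝ {a ∈ A | ∀ b ∈ A, ⟪b, w⟫ ≤ ⟪a, w⟫} :=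
  end_set_convexHull_finite_general A hfin
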